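/- arXiv:1607.05776 — 3 statements merged into one kernel-verified Lean document; each statement's English description precedes it below -/
import Mathlib

section
/- The number of labeled trees on n vertices (n ≥ 1) equals n^(n-2). -/
/-!
Joyal's proof. Pointing every vertex of a tree towards a fixed root `r` identifies labeled trees
with maps `p : α → α` all of whose orbits end at the fixed point `r`. Hence `n ^ 2` times their
number counts vertebrates: such maps together with a free choice of root and of a second marked
vertex, the tail. Vertebrates are as numerous as all `n ^ n` maps `α → α`: both are classified by a
finset `M` together with a forest hanging from `M` (a map which is the identity on `M` and
eventually sends every point into `M`), plus a permutation of `M` for a map (with `M` its set of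
periodic points), or a linear order of `M` for a vertebrate (with `M` its spine from the tail to the
root). There are `#M!` of either.
-/

open Function Set

namespace Cayley

variable {α : Type*}

def FunnelsInto (f : α → α) (s : Set α) : Prop := ∀ x, ∃ k, f^[k] x ∈ s

theorem FunnelsInto.congr {f g : α → α} {s : Set α} (hfg : ∀ x ∉ s, f x = g x)
    (hf : FunnelsInto f s) : FunnelsInto g s := by
  intro x
  obtain ⟨k, hk⟩ := hf x
  induction k generalizing x with
  | zero => exact ⟨0, hk⟩
  | succ k ih =>
    by_cases hx : x ∈ s
    · exact ⟨0, hx⟩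
    · obtain ⟨j, hj⟩ := ih (f x) hk
      exact ⟨j + 1, by rwa [iterate_succ_apply, ← hfg x hx]⟩

theorem funnelsInto_periodicPts [Finite α] (f : α → α) : FunnelsInto f (periodicPts f) := by
  intro x
  obtain ⟨i, j, hij, hfij⟩ := Finite.exists_ne_map_eq_of_infinite (f^[·] x)
  wlog hlt : i < j generalizing i j
  · exact this j i hij.symm hfij.symm (by omega)
  refine ⟨i, mk_mem_periodicPts (n := j - i) (by omega) ?_⟩
  rw [IsPeriodicPt, IsFixedPt, ← iterate_add_apply, Nat.sub_add_cancel hlt.le]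
  exact hfij.symm

theorem periodicPts_subset {f : α → α} {s : Set α} (hmaps : MapsTo f s s)
    (hf : FunnelsInto f s) : periodicPts f ⊆ s := by
  rintro x ⟨n, hn, hx⟩
  obtain ⟨k, hk⟩ := hf x
  -- `x` returns to itself after `n * k ≥ k` steps, by which time it has entered `s`.
  rw [← (hx.mul_const k).eq, ← Nat.sub_add_cancel (Nat.le_mul_of_pos_left k hn),
    iterate_add_apply]
  exact hmaps.iterate _ hk

def IsRootedAt (r : α) (p : α → α) : Prop := p r = r ∧ ∀ x, ∃ k, p^[k] x = r

namespace IsRootedAt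

variable {r : α} {p : α → α}

theorem eq_of_mem_periodicPts (hp : IsRootedAt r p) {x : α} (hx : x ∈ periodicPts p) : x = r :=
  periodicPts_subset (s := {r}) (mapsTo_singleton.2 hp.1) (fun x => hp.2 x) hx

theorem eq_of_isFixedPt (hp : IsRootedAt r p) {x : α} (hx : p x = x) : x = r :=
  hp.eq_of_mem_periodicPts
    (mk_mem_periodicPts one_pos ((show IsFixedPt p x from hx).isPeriodicPt 1))

theorem funnelsInto (hp : IsRootedAt r p) {s : Set α} (hr : r ∈ s) : FunnelsInto p s :=
  fun x => (hp.2 x).imp fun _ hk => by rwa [hk]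

theorem conj (hp : IsRootedAt r p) (e : α ≃ α) : IsRootedAt (e r) (e.conj p) := by
  have hsemi : Semiconj e p (e.conj p) := fun x => by simp
  refine ⟨by simp [hp.1], fun x => ?_⟩
  obtain ⟨k, hk⟩ := hp.2 (e.symm x)
  exact ⟨k, by rw [← e.apply_symm_apply x, ← (hsemi.iterate_right k).eq, hk]⟩

end IsRootedAt

theorem card_isRootedAt_eq [DecidableEq α] (r r' : α) :
    Nat.card {p : α → α // IsRootedAt r p} = Nat.card {p : α → α // IsRootedAt r' p} := by
  let e := Equiv.swap r r'
  refine Nat.card_congr ((e.conj).subtypeEquiv fun p => ⟨fun hp => ?_, fun hp => ?_⟩)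
  · simpa [e] using hp.conj e
  · have h := hp.conj e.symm
    rwa [← Equiv.conj_symm, Equiv.symm_apply_apply, Equiv.symm_swap, Equiv.swap_apply_right] at h

section Trees

open SimpleGraph

variable {r : α} {p : α → α}

def parentGraph (p : α → α) : SimpleGraph α := fromRel fun u v => p u = v

theorem parentGraph_adj {u v : α} : (parentGraph p).Adj u v ↔ u ≠ v ∧ (p u = v ∨ p v = u) :=
  fromRel_adj _ u v

namespace IsRootedAt

theorem reachable_parentGraph (hp : IsRootedAt r p) (x : α) : (parentGraph p).Reachable x r := by
  obtain ⟨k, hk⟩ := hp.2 x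
  induction k generalizing x with
  | zero => exact hk ▸ .rfl
  | succ k ih =>
    refine .trans ?_ (ih (p x) hk)
    by_cases hx : x = p x
    · exact hx ▸ .rfl
    · exact (parentGraph_adj.2 ⟨hx, .inl rfl⟩).reachable

theorem connected_parentGraph (hp : IsRootedAt r p) : (parentGraph p).Connected :=
  have : Nonempty α := ⟨r⟩
  ⟨fun x y => (hp.reachable_parentGraph x).trans (hp.reachable_parentGraph y).symm⟩

theorem apply_apply_ne (hp : IsRootedAt r p) {x : α} (hx : x ≠ r) : p (p x) ≠ x := fun h =>
  hx (hp.eq_of_mem_periodicPts (mk_mem_periodicPts two_pos h))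

/-- Every edge `s(x, p x)` of the parent graph is named by its lower end `x ≠ r`. -/
theorem card_edgeSet_parentGraph [Finite α] (hp : IsRootedAt r p) :
    Nat.card (parentGraph p).edgeSet + 1 = Nat.card α := by
  let e : {x // x ≠ r} → (parentGraph p).edgeSet := fun x =>
    ⟨s(x.1, p x), parentGraph_adj.2 ⟨fun h => x.2 (hp.eq_of_isFixedPt h.symm), .inl rfl⟩⟩
  have he : Bijective e := by
    refine ⟨fun x y hxy => Subtype.ext ?_, ?_⟩
    · rcases Sym2.eq_iff.1 (congrArg Subtype.val hxy) with ⟨h, -⟩ | ⟨h₁, h₂⟩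
      · exact h
      · exact absurd (by rw [h₂, h₁]) (hp.apply_apply_ne x.2)
    · rintro ⟨e, he⟩
      induction e using Sym2.ind with
      | _ u v =>
      obtain ⟨huv, h | h⟩ := parentGraph_adj.1 he
      · refine ⟨⟨u, fun hu => huv ?_⟩, Subtype.ext (by simp [e, h])⟩
        rw [← h, hu, hp.1]
      · refine ⟨⟨v, fun hv => huv ?_⟩, Subtype.ext (by simp [e, h, Sym2.eq_swap])⟩
        rw [← h, hv, hp.1]
  have := Fintype.ofFinite α
  classical
  rw [← Nat.card_eq_of_bijective e he, Nat.card_eq_fintype_card, Fintype.card_subtype_compl,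
    Fintype.card_subtype_eq, Nat.sub_add_cancel (Fintype.card_pos_iff.2 ⟨r⟩),
    Nat.card_eq_fintype_card]

theorem isTree_parentGraph [Finite α] (hp : IsRootedAt r p) : (parentGraph p).IsTree :=
  isTree_iff_connected_and_card.2 ⟨hp.connected_parentGraph, hp.card_edgeSet_parentGraph⟩

/-- The points where two rooted maps with the same parent graph disagree form a `p`-invariant
set avoiding the root, which must be empty since every `p`-orbit reaches the root. -/
theorem eq_of_parentGraph_eq {q : α → α} (hp : IsRootedAt r p) (hq : IsRootedAt r q)
    (hpq : parentGraph p = parentGraph q) : p = q := by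
  have hD : ∀ x, p x ≠ q x → p (p x) ≠ q (p x) := fun x hx => by
    have hxr : x ≠ r := by rintro rfl; exact hx (hp.1.trans hq.1.symm)
    have hadj : (parentGraph q).Adj x (p x) :=
      hpq ▸ parentGraph_adj.2 ⟨fun h => hxr (hp.eq_of_isFixedPt h.symm), .inl rfl⟩
    obtain ⟨-, h | h⟩ := parentGraph_adj.1 hadj
    · exact absurd h.symm hx
    · rw [h]; exact hp.apply_apply_ne hxr
  funext x
  by_contra hx
  have hiter (k : ℕ) : p (p^[k] x) ≠ q (p^[k] x) := by
    induction k with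
    | zero => exact hx
    | succ k ih => rw [iterate_succ_apply']; exact hD _ ih
  obtain ⟨k, hk⟩ := hp.2 x
  exact hiter k (by rw [hk, hp.1, hq.1])

end IsRootedAt

theorem _root_.SimpleGraph.Connected.exists_adj_dist_lt {G : SimpleGraph α} (hG : G.Connected)
    {v : α} (hv : v ≠ r) : ∃ w, G.Adj v w ∧ G.dist w r < G.dist v r := by
  obtain ⟨q, hq⟩ := hG.exists_walk_length_eq_dist v r
  have hnil : ¬q.Nil := fun h => hv h.eq
  refine ⟨q.snd, q.adj_snd hnil, ?_⟩
  have := q.length_tail_add_one hnil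
  have := dist_le q.tail
  omega

theorem exists_isRootedAt_parentGraph_eq [DecidableEq α] {G : SimpleGraph α}
    (hG : G.IsTree) (r : α) : ∃ p, IsRootedAt r p ∧ parentGraph p = G := by
  choose w hadj hdist using fun v (hv : v ≠ r) => hG.connected.exists_adj_dist_lt hv
  let p v := if hv : v = r then r else w v hv
  have hp : IsRootedAt r p := by
    refine ⟨by simp [p], fun x => ?_⟩
    induction hx : G.dist x r using Nat.strong_induction_on generalizing x with
    | _ n ih =>
    by_cases hxr : x = r
    · exact ⟨0, hxr⟩
    · obtain ⟨k, hk⟩ := ih _ (hx ▸ hdist x hxr) (w x hxr) rfl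
      exact ⟨k + 1, by simpa [p, hxr] using hk⟩
  have hle : parentGraph p ≤ G := by
    have : ∀ u v, u ≠ v → p u = v → G.Adj u v := fun u v huv h => by
      have hur : u ≠ r := by rintro rfl; exact huv (by simpa [p] using h)
      simp only [p, dif_neg hur] at h
      exact h ▸ hadj u hur
    intro u v huv
    obtain ⟨hne, h | h⟩ := parentGraph_adj.1 huv
    exacts [this u v hne h, (this v u hne.symm h).symm]
  exact ⟨p, hp, (isTree_iff_minimal_connected.1 hG).eq_of_le hp.connected_parentGraph hle⟩

theorem card_isTree_eq_card_isRootedAt [Finite α] [DecidableEq α] (r : α) :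
    Nat.card {G : SimpleGraph α // G.IsTree} = Nat.card {p : α → α // IsRootedAt r p} := by
  refine (Nat.card_eq_of_bijective (fun p => ⟨parentGraph p.1, p.2.isTree_parentGraph⟩)
    ⟨fun p q hpq => ?_, fun G => ?_⟩).symm
  · exact Subtype.ext (p.2.eq_of_parentGraph_eq q.2 (congrArg Subtype.val hpq))
  · obtain ⟨p, hp, hpG⟩ := exists_isRootedAt_parentGraph_eq G.2 r
    exact ⟨⟨p, hp⟩, Subtype.ext hpG⟩

end Trees

section Glue

variable (M : Finset α)

/-- The forests hanging from `M`, given by their parent maps off `M` and normalized to the identity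
on `M`. -/
def hangings : Set (α → α) := {h | (∀ x ∈ M, h x = x) ∧ FunnelsInto h M}

variable {M}

theorem nonempty_of_mem_hangings [Nonempty α] {h : α → α} (hh : h ∈ hangings M) : M.Nonempty :=
  let ⟨_, hk⟩ := hh.2 (Classical.arbitrary α)
  ⟨_, hk⟩

variable [DecidableEq α]

theorem piecewise_mem_hangings {f : α → α} (hf : FunnelsInto f M) :
    M.piecewise id f ∈ hangings M :=
  ⟨fun _ hx => M.piecewise_eq_of_mem _ _ hx,
    hf.congr fun _ hx => (M.piecewise_eq_of_notMem _ _ hx).symm⟩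

def glue (g : M → M) (h : α → α) (x : α) : α := if hx : x ∈ M then g ⟨x, hx⟩ else h x

variable {g : M → M} {h : α → α}

theorem glue_of_mem {x : α} (hx : x ∈ M) : glue g h x = g ⟨x, hx⟩ := dif_pos hx

theorem glue_of_notMem {x : α} (hx : x ∉ M) : glue g h x = h x := dif_neg hx

theorem semiconj_glue : Semiconj Subtype.val g (glue g h) := fun x => (glue_of_mem x.2).symm

theorem iterate_glue_coe (k : ℕ) (x : M) : (glue g h)^[k] x = (g^[k] x : α) :=
  (semiconj_glue.iterate_right k x).symm

theorem mapsTo_glue : MapsTo (glue g h) M M := fun x hx => glue_of_mem hx ▸ (g ⟨x, hx⟩).2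

theorem funnelsInto_glue (hh : FunnelsInto h M) : FunnelsInto (glue g h) M :=
  hh.congr fun _ hx => (glue_of_notMem hx).symm

theorem piecewise_glue (hh : ∀ x ∈ M, h x = x) : M.piecewise id (glue g h) = h := by
  funext x
  by_cases hx : x ∈ M
  · rw [M.piecewise_eq_of_mem _ _ hx, hh x hx]; rfl
  · rw [M.piecewise_eq_of_notMem _ _ hx, glue_of_notMem hx]

theorem glue_piecewise {f : α → α} (hg : ∀ x : M, (g x : α) = f x) :
    glue g (M.piecewise id f) = f := by
  funext x
  by_cases hx : x ∈ M
  · exact (glue_of_mem hx).trans (hg _)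
  · rw [glue_of_notMem hx, M.piecewise_eq_of_notMem _ _ hx]

end Glue

section Functions

variable [Finite α] [DecidableEq α] (M : Finset α)

noncomputable def periodicPtsFiberEquiv :
    {f : α → α // periodicPts f = M} ≃ Equiv.Perm M × hangings M where
  toFun f := (Set.BijOn.equiv f.1 (by simpa only [f.2] using bijOn_periodicPts f.1),
    ⟨_, piecewise_mem_hangings (by simpa only [f.2] using funnelsInto_periodicPts f.1)⟩)
  invFun σh := ⟨glue σh.1 σh.2, by
    refine (periodicPts_subset mapsTo_glue (funnelsInto_glue σh.2.2.2)).antisymm fun x hx => ?_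
    exact semiconj_glue.mapsTo_periodicPts (σh.1.injective.mem_periodicPts ⟨x, hx⟩)⟩
  left_inv f := Subtype.ext (glue_piecewise fun _ => rfl)
  right_inv σh := Prod.ext (Equiv.ext fun x => Subtype.ext (glue_of_mem x.2))
    (Subtype.ext (piecewise_glue σh.2.2.1))

end Functions

section Orbits

variable {f : α → α} {a : α}

theorem range_iterate_subset_of_iterate_eq {i j : ℕ} (hij : i < j) (h : f^[i] a = f^[j] a) :
    range (f^[·] a) ⊆ (f^[·] a) '' Iio j := by
  rintro _ ⟨k, rfl⟩
  induction k using Nat.strong_induction_on with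
  | _ k ih =>
  by_cases hk : k < j
  · exact ⟨k, hk, rfl⟩
  · have : f^[k] a = f^[k - j + i] a := by
      rw [iterate_add_apply, h, ← iterate_add_apply, Nat.sub_add_cancel (not_lt.1 hk)]
    simpa only [this] using ih _ (by omega)

theorem bijective_iterate_of_range_eq {M : Finset α} (hM : range (f^[·] a) = M) :
    Bijective fun i : Fin M.card =>
      (⟨f^[i] a, by rw [← Finset.mem_coe, ← hM]; exact mem_range_self _⟩ : M) := by
  classical
  refine (Fintype.bijective_iff_injective_and_card _).2 ⟨fun i j hij => ?_, by simp⟩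
  by_contra hne
  wlog hlt : i < j generalizing i j
  · exact this j i hij.symm (Ne.symm hne) (lt_of_le_of_ne (not_lt.1 hlt) (Ne.symm hne))
  have hsub := hM ▸ range_iterate_subset_of_iterate_eq hlt (congrArg Subtype.val hij)
  have := Finset.card_le_card (s := M) (t := (Finset.range j).image (f^[·] a))
    (by rwa [← Finset.coe_subset, Finset.coe_image, Finset.coe_range])
  have := (Finset.card_image_le (f := (f^[·] a))).trans (Finset.card_range j).le
  have := j.isLt
  omega

end Orbits

def truncSucc {m : ℕ} (i : Fin m) : Fin m := ⟨min (i + 1) (m - 1), by omega⟩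

theorem val_truncSucc {m : ℕ} (i : Fin m) : (truncSucc i : ℕ) = min ((i : ℕ) + 1) (m - 1) := rfl

theorem val_truncSucc_iterate {m : ℕ} (k : ℕ) (i : Fin m) :
    (truncSucc^[k] i : ℕ) = min (i + k) (m - 1) := by
  induction k with
  | zero => rw [iterate_zero_apply]; omega
  | succ k ih => rw [iterate_succ_apply', val_truncSucc, ih]; omega

/-- A tree, given by its parent map towards the root `head`, with a second marked vertex `tail`;
the path from `tail` to `head` is its spine. -/
@[ext]
structure Vertebrate (α : Type*) where
  head : α
  parent : α → α
  isRootedAt : IsRootedAt head parent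
  tail : α

namespace Vertebrate

def equivSigma : Vertebrate α ≃ Σ r : α, {p : α → α // IsRootedAt r p} × α where
  toFun v := ⟨v.head, ⟨v.parent, v.isRootedAt⟩, v.tail⟩
  invFun s := ⟨s.1, s.2.1.1, s.2.1.2, s.2.2⟩

instance [Finite α] : Finite (Vertebrate α) := .of_equiv _ equivSigma.symm

def spine (v : Vertebrate α) : Set α := range (v.parent^[·] v.tail)

variable (v : Vertebrate α) {M : Finset α} (hv : v.spine = M)
include hv

theorem funnelsInto_spine : FunnelsInto v.parent M := by
  obtain ⟨k, hk⟩ := v.isRootedAt.2 v.tail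
  exact v.isRootedAt.funnelsInto (hv ▸ ⟨k, hk⟩)

noncomputable def spineEquiv : Fin M.card ≃ M := .ofBijective _ (bijective_iterate_of_range_eq hv)

theorem coe_spineEquiv (i : Fin M.card) : (v.spineEquiv hv i : α) = v.parent^[i] v.tail := rfl

theorem iterate_card_sub_one : v.parent^[M.card - 1] v.tail = v.head := by
  obtain ⟨k, hk⟩ := v.isRootedAt.2 v.tail
  obtain ⟨j, hj⟩ := (v.spineEquiv hv).surjective
    ⟨v.head, by rw [← Finset.mem_coe, ← hv]; exact ⟨k, hk⟩⟩
  have hj' : v.parent^[j] v.tail = v.head := congrArg Subtype.val hj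
  rw [← Nat.sub_add_cancel (Nat.le_sub_one_of_lt j.isLt), iterate_add_apply, hj',
    iterate_fixed v.isRootedAt.1]

theorem parent_spineEquiv (i : Fin M.card) :
    v.parent (v.spineEquiv hv i) = v.spineEquiv hv (truncSucc i) := by
  rw [coe_spineEquiv, coe_spineEquiv, val_truncSucc]
  by_cases hi : (i : ℕ) + 1 ≤ M.card - 1
  · rw [min_eq_left hi, iterate_succ_apply']
  · rw [min_eq_right (by omega), show (i : ℕ) = M.card - 1 by omega, v.iterate_card_sub_one hv,
      v.isRootedAt.1]

end Vertebrate

section OfSpine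

variable [DecidableEq α] {M : Finset α} {m : ℕ} (ℓ : Fin m ≃ M) (h : α → α)

theorem iterate_glue_conj_truncSucc (k : ℕ) (i : Fin m) :
    (glue (ℓ.conj truncSucc) h)^[k] (ℓ i) = ℓ (truncSucc^[k] i) := by
  have hsemi : Semiconj ℓ truncSucc (ℓ.conj truncSucc) := fun i => by simp [Equiv.conj_apply]
  rw [iterate_glue_coe, ← (hsemi.iterate_right k).eq]

variable {h} (hh : FunnelsInto h M) (hm : 0 < m)
include hh hm

theorem isRootedAt_glue_conj_truncSucc :
    IsRootedAt (ℓ ⟨m - 1, by omega⟩ : α) (glue (ℓ.conj truncSucc) h) := by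
  have hlast (k : ℕ) (i : Fin m) (hk : m - 1 ≤ i + k) :
      (glue (ℓ.conj truncSucc) h)^[k] (ℓ i) = ℓ ⟨m - 1, by omega⟩ := by
    rw [iterate_glue_conj_truncSucc]
    congr 2
    ext
    simp only [val_truncSucc_iterate]
    omega
  refine ⟨hlast 1 _ (Nat.le_succ _), fun x => ?_⟩
  obtain ⟨k, hk⟩ := funnelsInto_glue (g := ℓ.conj truncSucc) hh x
  refine ⟨m - 1 + k, ?_⟩
  rw [iterate_add_apply, show (glue (ℓ.conj truncSucc) h)^[k] x = ℓ (ℓ.symm ⟨_, hk⟩) by simp]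
  exact hlast _ _ (by omega)

omit hh in
theorem truncSucc_iterate_zero (i : Fin m) : truncSucc^[i] (⟨0, hm⟩ : Fin m) = i := by
  ext
  simp only [val_truncSucc_iterate]
  omega

def Vertebrate.ofSpine : Vertebrate α :=
  ⟨ℓ ⟨m - 1, by omega⟩, glue (ℓ.conj truncSucc) h, isRootedAt_glue_conj_truncSucc ℓ hh hm,
    ℓ ⟨0, hm⟩⟩

theorem Vertebrate.spine_ofSpine : (ofSpine ℓ hh hm).spine = M := by
  ext x
  constructor
  · rintro ⟨k, rfl⟩
    simp only [ofSpine, iterate_glue_conj_truncSucc]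
    exact (ℓ _).2
  · intro hx
    refine ⟨ℓ.symm ⟨x, hx⟩, ?_⟩
    simp only [ofSpine, iterate_glue_conj_truncSucc, truncSucc_iterate_zero hm,
      Equiv.apply_symm_apply]

end OfSpine

section Fibers

variable [DecidableEq α]

noncomputable def spineFiberEquiv [Nonempty α] (M : Finset α) :
    {v : Vertebrate α // v.spine = M} ≃ (Fin M.card ≃ M) × hangings M where
  toFun v := (v.1.spineEquiv v.2, ⟨_, piecewise_mem_hangings (v.1.funnelsInto_spine v.2)⟩)
  invFun ℓh :=
    have hm := Finset.card_pos.2 (nonempty_of_mem_hangings ℓh.2.2)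
    ⟨.ofSpine ℓh.1 ℓh.2.2.2 hm, Vertebrate.spine_ofSpine ℓh.1 ℓh.2.2.2 hm⟩
  left_inv := by
    rintro ⟨v, hv⟩
    refine Subtype.ext
      (Vertebrate.ext (v.iterate_card_sub_one hv) (glue_piecewise fun x => ?_) rfl)
    rw [Equiv.conj_apply, ← v.parent_spineEquiv hv, Equiv.apply_symm_apply]
  right_inv := by
    rintro ⟨ℓ, h, hh⟩
    refine Prod.ext (Equiv.ext fun i => Subtype.ext ?_) (Subtype.ext (piecewise_glue hh.1))
    simp [Vertebrate.coe_spineEquiv, Vertebrate.ofSpine, iterate_glue_conj_truncSucc,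
      truncSucc_iterate_zero]

end Fibers

section Counting

variable [Fintype α]

theorem card_eq_sum_card_fiber {β : Type*} [Finite β] (g : β → Set α) :
    Nat.card β = ∑ M : Finset α, Nat.card {x // g x = M} := by
  rw [← Nat.card_sigma]
  exact Nat.card_congr ((Equiv.sigmaFiberEquiv fun x => (toFinite (g x)).toFinset).symm.trans
    (Equiv.sigmaCongrRight fun M => Equiv.subtypeEquivRight fun x => by
      rw [← Finset.coe_inj, Finite.coe_toFinset]))

variable [DecidableEq α]

theorem card_vertebrate_eq_card_fun [Nonempty α] :
    Nat.card (Vertebrate α) = Nat.card (α → α) := by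
  rw [card_eq_sum_card_fiber Vertebrate.spine, card_eq_sum_card_fiber periodicPts]
  refine Finset.sum_congr rfl fun M _ => ?_
  rw [Nat.card_congr (spineFiberEquiv M), Nat.card_congr (periodicPtsFiberEquiv M), Nat.card_prod,
    Nat.card_prod, Nat.card_congr (M.equivFin.symm.equivCongr (Equiv.refl M))]

theorem card_vertebrate (r : α) :
    Nat.card (Vertebrate α) = Nat.card {p // IsRootedAt r p} * Nat.card α ^ 2 := by
  rw [Nat.card_congr Vertebrate.equivSigma, Nat.card_sigma]
  simp_rw [Nat.card_prod, card_isRootedAt_eq _ r]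
  rw [Finset.sum_const, Finset.card_univ, smul_eq_mul, ← Nat.card_eq_fintype_card]
  ring

theorem card_isTree [Nonempty α] :
    Nat.card {G : SimpleGraph α // G.IsTree} = Nat.card α ^ (Nat.card α - 2) := by
  obtain ⟨r⟩ := ‹Nonempty α›
  have key := (card_vertebrate r).symm.trans card_vertebrate_eq_card_fun
  rw [Nat.card_fun] at key
  rw [card_isTree_eq_card_isRootedAt r]
  refine Nat.eq_of_mul_eq_mul_right (pow_pos (Nat.card_pos (α := α)) 2) ?_
  rw [key, ← pow_add]
  rcases (by have := Nat.card_pos (α := α); omega : Nat.card α = 1 ∨ 2 ≤ Nat.card α) with h | h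
  · rw [h]; norm_num
  · rw [Nat.sub_add_cancel h]

end Counting

end Cayley

/-- Cayley's formula: the number of labeled trees on `n ≥ 1` vertices equals `n^(n-2)`
(with `n^(n-2)` interpreted as `1` for `n = 1`, as truncated subtraction gives). -/
theorem cayley_formula (n : ℕ) (hn : 1 ≤ n) :
    Nat.card {G : SimpleGraph (Fin n) // G.IsTree} = n ^ (n - 2) := by
  have : Nonempty (Fin n) := ⟨⟨0, hn⟩⟩
  simpa using Cayley.card_isTree (α := Fin n)
end

section
/- If R(x) is a formal power series over ℚ with zero constant term satisfying R(x) = x · exp(R(x)), then for every n ≥ 1 the coefficient of x^n in R(x) equals n^(n-1)/n!. -/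
/-!
Substituting `R` is a ring homomorphism and `exp ^ k = exp (k x)`, so the functional equation gives
`R ^ k = X ^ k · exp (k R)`. Comparing coefficients, `[x^(p+k)] R^k = ∑_{j ≤ p} k^j/j! · [x^p] R^j`,
which determines all coefficients of all powers of `R` by strong induction on the degree. The
closed form `[x^m] R^k = (k/m) · m^(m-k)/(m-k)!` propagates through this recursion by Abel's
binomial identity, and `k = 1` is the theorem.
-/

open PowerSeries

/-- Composition `Φ(R)` of formal power series, valid when `R` has zero constant term:
the coefficient of `x^m` is `∑_{k ≤ m} ([z^k] Φ) · [x^m](R^k)`. -/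
noncomputable def psComp {K : Type*} [CommRing K] (Φ R : PowerSeries K) : PowerSeries K :=
  PowerSeries.mk fun m => ∑ k ∈ Finset.range (m + 1),
    (PowerSeries.coeff k Φ) * PowerSeries.coeff m (R ^ k)

open Finset Nat

theorem abel_binomial_identity {K : Type*} [Field K] [CharZero K] (x : K) {p : ℕ} (hp : 1 ≤ p) :
    ∑ j ∈ range (p + 1), x ^ j / j ! * (j / p * p ^ (p - j) / (p - j)!) =
      x * (x + p) ^ (p - 1) / p ! := by
  obtain ⟨q, rfl⟩ : ∃ q, p = q + 1 := ⟨p - 1, by omega⟩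
  rw [sum_range_succ', add_tsub_cancel_right, add_pow, mul_sum, sum_div]
  simp only [CharP.cast_eq_zero, zero_div, zero_mul, mul_zero, add_zero]
  refine sum_congr rfl fun i hi => ?_
  have hiq : i ≤ q := Nat.lt_succ_iff.mp (mem_range.mp hi)
  rw [Nat.add_sub_add_right, Nat.cast_choose K hiq, factorial_succ, factorial_succ]
  have : (q ! : K) ≠ 0 := Nat.cast_ne_zero.mpr q.factorial_ne_zero
  push_cast
  field_simp
  ring

namespace PowerSeries

theorem coeff_pow_eq_zero_of_lt {K : Type*} [CommSemiring K] {R : K⟦X⟧}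
    (h0 : constantCoeff R = 0) {m j : ℕ} (h : m < j) : coeff m (R ^ j) = 0 :=
  X_pow_dvd_iff.mp (pow_dvd_pow_of_dvd (X_dvd_iff.mpr h0) j) m h

theorem coeff_subst_eq_sum_range {K : Type*} [CommRing K] {R : K⟦X⟧}
    (h0 : constantCoeff R = 0) (Φ : K⟦X⟧) (m : ℕ) :
    coeff m (Φ.subst R) = ∑ j ∈ range (m + 1), coeff j Φ * coeff m (R ^ j) := by
  rw [coeff_subst' (HasSubst.of_constantCoeff_zero' h0)]
  refine finsum_eq_sum_of_support_subset _ fun j hj => ?_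
  by_contra hjm
  rw [coe_range, Set.mem_Iio, not_lt] at hjm
  exact hj (by simp only [coeff_pow_eq_zero_of_lt h0 (show m < j by omega), smul_zero])

theorem psComp_eq_subst {K : Type*} [CommRing K] {R : K⟦X⟧} (h0 : constantCoeff R = 0)
    (Φ : K⟦X⟧) : psComp Φ R = Φ.subst R := by
  ext m
  rw [psComp, coeff_mk, coeff_subst_eq_sum_range h0]

theorem coeff_rescale_exp {K : Type*} [Field K] [CharZero K] (x : K) (j : ℕ) :
    coeff j (rescale x (exp K)) = x ^ j / j ! := by
  simp [coeff_rescale, coeff_exp, div_eq_mul_inv]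

theorem pow_eq_X_pow_mul_subst_rescale_exp {K : Type*} [Field K] [CharZero K] {R : K⟦X⟧}
    (h0 : constantCoeff R = 0) (hR : R = X * (exp K).subst R) (k : ℕ) :
    R ^ k = X ^ k * (rescale (k : K) (exp K)).subst R := by
  rw [← exp_pow_eq_rescale_exp, subst_pow (HasSubst.of_constantCoeff_zero' h0), ← mul_pow, ← hR]

theorem coeff_pow_of_eq_X_mul_subst_exp {K : Type*} [Field K] [CharZero K] {R : K⟦X⟧}
    (h0 : constantCoeff R = 0) (hR : R = X * (exp K).subst R) {m k : ℕ} (hm : 1 ≤ m)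
    (hkm : k ≤ m) : coeff m (R ^ k) = k / m * m ^ (m - k) / (m - k)! := by
  induction m using Nat.strong_induction_on generalizing k with
  | _ m ih =>
  obtain rfl | hk := k.eq_zero_or_pos
  · simp [coeff_one, show m ≠ 0 by omega]
  obtain ⟨p, rfl⟩ : ∃ p, m = p + k := ⟨m - k, by omega⟩
  rw [pow_eq_X_pow_mul_subst_rescale_exp h0 hR, coeff_X_pow_mul, coeff_subst_eq_sum_range h0,
    add_tsub_cancel_right]
  simp only [coeff_rescale_exp]
  obtain rfl | hp := p.eq_zero_or_pos
  · have : (k : K) ≠ 0 := by exact_mod_cast hk.ne'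
    simp [this]
  rw [sum_congr rfl fun j hj => by
      rw [ih p (by omega) hp (Nat.lt_succ_iff.mp (mem_range.mp hj))],
    abel_binomial_identity _ hp]
  obtain ⟨r, rfl⟩ : ∃ r, p = r + 1 := ⟨p - 1, by omega⟩
  have : (r : K) + 1 + k ≠ 0 := by exact_mod_cast (show r + 1 + k ≠ 0 by omega)
  rw [add_tsub_cancel_right, pow_succ]
  push_cast
  field_simp
  ring

end PowerSeries

/-- If `R ∈ ℚ[[x]]` has zero constant term and satisfies `R = x · exp(R)`, then
for every `n ≥ 1` the coefficient of `x^n` in `R` equals `n^(n-1)/n!`. -/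
theorem coeff_tree_function (R : PowerSeries ℚ)
    (h0 : PowerSeries.constantCoeff R = 0)
    (hR : R = PowerSeries.X * psComp (PowerSeries.exp ℚ) R)
    (n : ℕ) (hn : 1 ≤ n) :
    PowerSeries.coeff n R = (n : ℚ) ^ (n - 1) / (n.factorial : ℚ) := by
  rw [psComp_eq_subst h0] at hR
  have h := coeff_pow_of_eq_X_mul_subst_exp h0 hR hn hn (k := 1)
  rw [pow_one] at h
  rw [h, ← Nat.mul_factorial_pred (by omega : n ≠ 0)]
  have : (n : ℚ) ≠ 0 := by positivity
  push_cast
  field_simp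
end

section
/- Define W_n = (n!/n^(n−1)) · Σ_{k=0}^{n−2} n^k/k! for n ≥ 2. Then W_n / n^(3/2) tends to √(π/2) as n → ∞. -/
/-!
Write `n = m + 2`. Since `∫_x^∞ t^m e^{-t} dt = m! e^{-x} ∑_{j ≤ m} x^j / j!`, the partial sum of
`e^n` in `W n` is an incomplete Gamma integral, and the substitution `t = n + √n u` gives
`W (m + 2) = (m + 1) √n ∫_0^∞ (1 + u/√n)^m e^{-√n u} du`. With `x = u/√n` the integrand is
`exp (n (log (1 + x) - x)) / (1 + x)^2`, and `-x²/(x + 2) ≤ log (1 + x) - x ≤ -x²/(2(1 + x))` show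
that it tends to `exp (-u²/2)` while staying below `exp ((1 - u)/2)`. Dominated convergence and
`∫_0^∞ exp (-u²/2) du = √(π/2)` finish the proof.
-/

open Filter

/-- The average total height over all rooted labeled trees on `n` vertices:
`W_n = (n!/n^(n−1)) · Σ_{k=0}^{n−2} n^k/k!`. -/
noncomputable def W (n : ℕ) : ℝ :=
  ((n.factorial : ℝ) / (n : ℝ) ^ (n - 1)) *
    ∑ k ∈ Finset.range (n - 1), (n : ℝ) ^ k / (k.factorial : ℝ)

open Real MeasureTheory Set Finset Topology
open scoped Nat

lemma hasDerivAt_sum_range_pow_div_factorial (m : ℕ) (t : ℝ) :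
    HasDerivAt (fun t : ℝ => ∑ j ∈ range (m + 1), t ^ j / j !)
      (∑ j ∈ range m, t ^ j / j !) t := by
  induction m with
  | zero => simpa using hasDerivAt_const t (1 : ℝ)
  | succ m ih =>
    have h := ih.fun_add ((hasDerivAt_pow (m + 1) t).div_const ((m + 1)! : ℝ))
    simp only [Finset.sum_range_succ _ (m + 1)]
    refine h.congr_deriv ?_
    rw [Finset.sum_range_succ, Nat.factorial_succ]
    push_cast
    field_simp

lemma integrableOn_Ioi_pow_mul_exp_neg (m : ℕ) (x : ℝ) :
    IntegrableOn (fun t : ℝ => t ^ m * exp (-t)) (Ioi x) := by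
  refine integrable_of_isBigO_exp_neg one_half_pos (by fun_prop) ?_
  have h := (isLittleO_pow_exp_pos_mul_atTop m one_half_pos).isBigO.mul
    (Asymptotics.isBigO_refl (fun t : ℝ => exp (-t)) atTop)
  refine h.congr_right fun t => ?_
  rw [← exp_add]
  ring_nf

lemma integral_Ioi_pow_mul_exp_neg (m : ℕ) (x : ℝ) :
    ∫ t in Ioi x, t ^ m * exp (-t) = m ! * exp (-x) * ∑ j ∈ range (m + 1), x ^ j / j ! := by
  set S : ℝ → ℝ := fun t => ∑ j ∈ range (m + 1), t ^ j / (j ! : ℝ)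
  have hderiv : ∀ t ∈ Ici x,
      HasDerivAt (fun t => -(m ! * exp (-t) * S t)) (t ^ m * exp (-t)) t := by
    intro t _
    have := (((hasDerivAt_neg' t).exp.const_mul (m ! : ℝ)).mul
      (hasDerivAt_sum_range_pow_div_factorial m t)).neg
    refine this.congr_deriv ?_
    simp only [Finset.sum_range_succ _ m]
    field_simp
    ring
  have hlim : Tendsto (fun t => -(m ! * exp (-t) * S t)) atTop (𝓝 0) := by
    have h := ((tendsto_finsetSum (range (m + 1)) fun j _ =>
      (tendsto_pow_mul_exp_neg_atTop_nhds_zero j).div_const (j ! : ℝ)).const_mul (m ! : ℝ)).neg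
    simp only [zero_div, Finset.sum_const_zero, mul_zero, neg_zero] at h
    refine h.congr fun t => ?_
    simp only [S, Finset.mul_sum]
    exact congrArg _ (Finset.sum_congr rfl fun j _ => by ring)
  rw [integral_Ioi_of_hasDerivAt_of_tendsto' hderiv (integrableOn_Ioi_pow_mul_exp_neg m x) hlim]
  simp [S]

lemma integral_Ioi_eq_mul_integral_Ioi_zero (f : ℝ → ℝ) (c : ℝ) {s : ℝ} (hs : 0 < s) :
    ∫ t in Ioi c, f t = s * ∫ u in Ioi 0, f (c + s * u) := by
  rw [integral_comp_mul_left_Ioi (fun v => f (c + v)) 0 hs, mul_zero, smul_eq_mul,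
    mul_inv_cancel_left₀ hs.ne']
  simp_rw [add_comm c]
  simpa using ((measurePreserving_add_right volume c).setIntegral_preimage_emb
    (measurableEmbedding_addRight c) f (Ioi c)).symm

noncomputable def tailIntegrand (m : ℕ) (u : ℝ) : ℝ :=
  (1 + u / √(m + 2)) ^ m * exp (-(√(m + 2) * u))

lemma integral_Ioi_pow_mul_exp_neg_eq_tailIntegrand (m : ℕ) :
    ∫ t in Ioi ((m : ℝ) + 2), t ^ m * exp (-t) =
      √(m + 2) * (m + 2) ^ m * exp (-(m + 2)) * ∫ u in Ioi 0, tailIntegrand m u := by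
  have hN : (0 : ℝ) < m + 2 := by positivity
  have hs : (0 : ℝ) < √(m + 2) := sqrt_pos.mpr hN
  have hsq : (√(m + 2) : ℝ) ^ 2 = m + 2 := sq_sqrt hN.le
  have hpoint : ∀ u : ℝ, (m + 2 + √(m + 2) * u) ^ m * exp (-(m + 2 + √(m + 2) * u)) =
      (m + 2) ^ m * exp (-(m + 2)) * tailIntegrand m u := by
    intro u
    have hlin : (m : ℝ) + 2 + √(m + 2) * u = (m + 2) * (1 + u / √(m + 2)) := by
      field_simp; linear_combination u * hsq
    rw [tailIntegrand, hlin, mul_pow, ← hlin, neg_add, exp_add]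
    ring
  rw [integral_Ioi_eq_mul_integral_Ioi_zero _ _ hs]
  simp only [hpoint, integral_const_mul]
  ring

lemma W_add_two (m : ℕ) : W (m + 2) = (m + 1) * √(m + 2) * ∫ u in Ioi 0, tailIntegrand m u := by
  have hN : (0 : ℝ) < m + 2 := by positivity
  have hsum : ∑ k ∈ range (m + 1), ((m : ℝ) + 2) ^ k / k ! =
      exp (m + 2) / m ! * ∫ t in Ioi ((m : ℝ) + 2), t ^ m * exp (-t) := by
    rw [integral_Ioi_pow_mul_exp_neg]
    field_simp
    rw [← exp_add]; simp
  rw [W, show m + 2 - 1 = m + 1 by rfl]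
  push_cast
  rw [hsum, integral_Ioi_pow_mul_exp_neg_eq_tailIntegrand,
    Nat.factorial_succ, Nat.factorial_succ]
  push_cast
  field_simp
  have hexp : exp ((m : ℝ) + 2) * exp (-(m + 2)) = 1 := by rw [← exp_add]; simp
  linear_combination ((m : ℝ) + 2) ^ (m + 1) * (∫ u in Ioi 0, tailIntegrand m u) * hexp

lemma natCast_add_two_mul_div_sqrt_sq (m : ℕ) (u : ℝ) :
    ((m : ℝ) + 2) * (u / √(m + 2)) ^ 2 = u ^ 2 := by
  rw [div_pow, sq_sqrt (by positivity)]
  field_simp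

lemma log_one_add_sub_self_le {x : ℝ} (hx : 0 ≤ x) :
    log (1 + x) - x ≤ -(x ^ 2 / (2 * (1 + x))) := by
  have hpos : 0 < 1 + x := by linarith
  have h := self_le_sinh_iff.mpr (log_nonneg (by linarith : 1 ≤ 1 + x))
  rw [sinh_log hpos] at h
  calc log (1 + x) - x ≤ ((1 + x) - (1 + x)⁻¹) / 2 - x := by linarith
    _ = -(x ^ 2 / (2 * (1 + x))) := by field_simp; ring

lemma neg_sq_div_le_log_one_add_sub_self {x : ℝ} (hx : 0 ≤ x) :
    -(x ^ 2 / (x + 2)) ≤ log (1 + x) - x := by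
  have h := le_log_one_add_of_nonneg hx
  calc -(x ^ 2 / (x + 2)) = 2 * x / (x + 2) - x := by field_simp; ring
    _ ≤ log (1 + x) - x := by linarith

lemma tailIntegrand_eq (m : ℕ) {u : ℝ} (hu : 0 ≤ u) :
    tailIntegrand m u = exp ((m + 2) * (log (1 + u / √(m + 2)) - u / √(m + 2))) /
      (1 + u / √(m + 2)) ^ 2 := by
  rw [tailIntegrand]
  set x := u / √(m + 2)
  have hpos : 0 < 1 + x := by positivity
  have hN : (0 : ℝ) < m + 2 := by positivity
  have hx : ((m : ℝ) + 2) * x = √(m + 2) * u := by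
    simp only [x]; field_simp; rw [sq_sqrt hN.le]; ring
  have hlog : ((m : ℝ) + 2) * log (1 + x) = log ((1 + x) ^ (m + 2)) := by
    rw [log_pow]; push_cast; ring
  rw [mul_sub, hx, hlog, exp_sub, exp_log (by positivity), pow_add, exp_neg]
  clear_value x
  field_simp

lemma tendsto_tailIntegrand {u : ℝ} (hu : 0 ≤ u) :
    Tendsto (fun m : ℕ => tailIntegrand m u) atTop (𝓝 (exp (-(u ^ 2 / 2)))) := by
  set x : ℕ → ℝ := fun m => u / √(m + 2)
  have hx : Tendsto x atTop (𝓝 0) := tendsto_const_nhds.div_atTop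
    (tendsto_sqrt_atTop.comp (tendsto_atTop_add_const_right _ 2 tendsto_natCast_atTop_atTop))
  have hx0 : ∀ m, 0 ≤ x m := fun m => by positivity
  have hsq : ∀ m : ℕ, ((m : ℝ) + 2) * x m ^ 2 = u ^ 2 := (natCast_add_two_mul_div_sqrt_sq · u)
  have hexponent : Tendsto (fun m : ℕ => (m + 2) * (log (1 + x m) - x m)) atTop
      (𝓝 (-(u ^ 2 / 2))) := by
    refine tendsto_of_tendsto_of_tendsto_of_le_of_le
      (g := fun m => -(u ^ 2 / (x m + 2))) (h := fun m => -(u ^ 2 / (2 * (1 + x m))))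
      ?_ ?_ (fun m => ?_) (fun m => ?_)
    · simpa using (tendsto_const_nhds (x := u ^ 2)).div (hx.add_const 2) (by norm_num) |>.neg
    · simpa using (tendsto_const_nhds (x := u ^ 2)).div ((hx.const_add 1).const_mul 2)
        (by norm_num) |>.neg
    · calc -(u ^ 2 / (x m + 2)) = (m + 2) * -(x m ^ 2 / (x m + 2)) := by rw [← hsq m]; ring
        _ ≤ _ := by gcongr; exact neg_sq_div_le_log_one_add_sub_self (hx0 m)
    · calc (m + 2) * (log (1 + x m) - x m) ≤ (m + 2) * -(x m ^ 2 / (2 * (1 + x m))) := by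
            gcongr; exact log_one_add_sub_self_le (hx0 m)
        _ = -(u ^ 2 / (2 * (1 + x m))) := by rw [← hsq m]; ring
  have h := ((continuous_exp.tendsto _).comp hexponent).div ((hx.const_add 1).pow 2) (by simp)
  simp only [add_zero, one_pow, div_one] at h
  exact h.congr fun m => (tailIntegrand_eq m hu).symm

lemma tailIntegrand_le (m : ℕ) {u : ℝ} (hu : 0 ≤ u) : tailIntegrand m u ≤ exp ((1 - u) / 2) := by
  set x := u / √(m + 2)
  have hx0 : 0 ≤ x := by positivity
  have hxu : x ≤ u := div_le_self hu (one_le_sqrt.mpr (by linarith [m.cast_nonneg (α := ℝ)]))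
  have hsq : ((m : ℝ) + 2) * x ^ 2 = u ^ 2 := natCast_add_two_mul_div_sqrt_sq m u
  have hexponent : ((m : ℝ) + 2) * (log (1 + x) - x) ≤ (1 - u) / 2 :=
    calc ((m : ℝ) + 2) * (log (1 + x) - x) ≤ (m + 2) * -(x ^ 2 / (2 * (1 + x))) := by
          gcongr; exact log_one_add_sub_self_le hx0
      _ = -(u ^ 2 / (2 * (1 + x))) := by rw [← hsq]; ring
      _ ≤ (1 - u) / 2 := by
          rw [neg_le, le_div_iff₀ (by positivity)]; nlinarith
  rw [tailIntegrand_eq m hu]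
  calc exp ((m + 2) * (log (1 + x) - x)) / (1 + x) ^ 2 ≤ exp ((m + 2) * (log (1 + x) - x)) :=
        div_le_self (exp_pos _).le (one_le_pow₀ (by linarith))
    _ ≤ exp ((1 - u) / 2) := exp_le_exp.mpr hexponent

lemma tendsto_integral_tailIntegrand :
    Tendsto (fun m : ℕ => ∫ u in Ioi 0, tailIntegrand m u) atTop (𝓝 √(π / 2)) := by
  have hgauss : ∫ u in Ioi 0, exp (-(u ^ 2 / 2)) = √(π / 2) := by
    have h := integral_gaussian_Ioi (1 / 2)
    rw [show π / (1 / 2) = 2 ^ 2 * (π / 2) by ring, sqrt_mul (by positivity),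
      sqrt_sq (by norm_num)] at h
    simpa [neg_div, div_eq_inv_mul] using h
  have hdom : IntegrableOn (fun u : ℝ => exp ((1 - u) / 2)) (Ioi 0) :=
    IntegrableOn.congr_fun ((exp_neg_integrableOn_Ioi 0 one_half_pos).const_mul (exp (1 / 2)))
      (fun u _ => by rw [← exp_add]; congr 1; ring) measurableSet_Ioi
  rw [← hgauss]
  refine tendsto_integral_filter_of_dominated_convergence _
    (Eventually.of_forall fun m => ?_) (Eventually.of_forall fun m => ?_) hdom ?_
  · exact Continuous.aestronglyMeasurable (by unfold tailIntegrand; fun_prop)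
  · refine (ae_restrict_iff' measurableSet_Ioi).mpr (Eventually.of_forall fun u hu => ?_)
    rw [norm_of_nonneg (by rw [tailIntegrand_eq m (le_of_lt hu)]; positivity)]
    exact tailIntegrand_le m (le_of_lt hu)
  · exact (ae_restrict_iff' measurableSet_Ioi).mpr
      (Eventually.of_forall fun u hu => tendsto_tailIntegrand (le_of_lt hu))

/-- `W_n / n^(3/2) → √(π/2)` as `n → ∞`, i.e. `W_n ~ n^(3/2)·√(π/2)`. -/
theorem W_asymptotics :
    Tendsto (fun n : ℕ => W n / (n : ℝ) ^ ((3 : ℝ) / 2)) atTop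
      (nhds (Real.sqrt (Real.pi / 2))) := by
  rw [← tendsto_add_atTop_iff_nat 2]
  have hratio : Tendsto (fun m : ℕ => ((m : ℝ) + 1) / (m + 2)) atTop (𝓝 1) :=
    ((tendsto_natCast_div_add_atTop (1 : ℝ)).comp (tendsto_add_atTop_nat 1)).congr
      fun m => by simp only [Function.comp_apply]; push_cast; ring
  have h := hratio.mul tendsto_integral_tailIntegrand
  rw [one_mul] at h
  refine h.congr fun m => ?_
  have hN : (0 : ℝ) < m + 2 := by positivity
  rw [W_add_two, Nat.cast_add, Nat.cast_two, show (3 : ℝ) / 2 = 1 + 1 / 2 by norm_num,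
    rpow_add hN, rpow_one, ← sqrt_eq_rpow]
  field_simp
end
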